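/- Let O_L, O_R ∈ SO(3), let λ, λ̃ : Fin 3 → ℝ, and suppose O_L · diag(λ) · (O_R)ᵀ = diag(λ̃). Then for all indices n, m ∈ Fin 3 with |λ_m| ≠ |λ̃_n|, the matrix entries satisfy (O_L)_{nm} = 0 and (O_R)_{nm} = 0. -/
import Mathlib


open Matrix

/-- `O` is a real 3×3 special orthogonal matrix. -/
def IsSO3 (O : Matrix (Fin 3) (Fin 3) ℝ) : Prop := O * Oᵀ = 1 ∧ O.det = 1

theorem entries_vanish_of_distinct_singular_values
    (OL OR : Matrix (Fin 3) (Fin 3) ℝ) (hOL : IsSO3 OL) (hOR : IsSO3 OR)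
    (lam lamT : Fin 3 → ℝ)
    (h : OL * Matrix.diagonal lam * ORᵀ = Matrix.diagonal lamT) :
    ∀ n m : Fin 3, |lam m| ≠ |lamT n| → OL n m = 0 ∧ OR n m = 0 := by
  have hORt : ORᵀ * OR = 1 := mul_eq_one_comm.mp hOR.1
  have hOLt : OLᵀ * OL = 1 := mul_eq_one_comm.mp hOL.1
  have e1 : OL * Matrix.diagonal lam = Matrix.diagonal lamT * OR := by
    calc OL * Matrix.diagonal lam
        = OL * Matrix.diagonal lam * (ORᵀ * OR) := by rw [hORt, mul_one]
      _ = (OL * Matrix.diagonal lam * ORᵀ) * OR := by rw [← mul_assoc]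
      _ = Matrix.diagonal lamT * OR := by rw [h]
  have h2 : OR * Matrix.diagonal lam * OLᵀ = Matrix.diagonal lamT := by
    have := congrArg Matrix.transpose h
    simpa [Matrix.transpose_mul, Matrix.diagonal_transpose, mul_assoc] using this
  have e2 : OR * Matrix.diagonal lam = Matrix.diagonal lamT * OL := by
    calc OR * Matrix.diagonal lam
        = OR * Matrix.diagonal lam * (OLᵀ * OL) := by rw [hOLt, mul_one]
      _ = (OR * Matrix.diagonal lam * OLᵀ) * OL := by rw [← mul_assoc]
      _ = Matrix.diagonal lamT * OL := by rw [h2]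
  intro n m hne
  have he1 := congrFun (congrFun e1 n) m
  have he2 := congrFun (congrFun e2 n) m
  rw [Matrix.mul_diagonal, Matrix.diagonal_mul] at he1 he2
  have hsq : lam m ^ 2 - lamT n ^ 2 ≠ 0 := by
    intro hs
    exact hne (by rw [← Real.sqrt_sq_eq_abs, ← Real.sqrt_sq_eq_abs]; congr 1; linarith)
  constructor
  · have hz : OL n m * (lam m ^ 2 - lamT n ^ 2) = 0 := by
      linear_combination lam m * he1 + lamT n * he2
    exact (mul_eq_zero.mp hz).resolve_right hsq
  · have hz : OR n m * (lam m ^ 2 - lamT n ^ 2) = 0 := by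
      linear_combination lamT n * he1 + lam m * he2
    exact (mul_eq_zero.mp hz).resolve_right hsq
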